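/- arXiv:1604.07111 — 3 statements merged into one kernel-verified Lean document; each statement's English description precedes it below -/
import Mathlib

section
/- In the example, for every ω ∈ Ω with ω ≠ (0,0,0) and for all T, λ > 0, the value functions satisfy V[v_T](ω) = 1 and V[w_λ](ω) = 1. -/
open MeasureTheory Set Filter Topology

noncomputable section

/-- Concatenation `z ⋄_h z'` of two processes at time `h`:
`(z ⋄_h z')(t) = z(t)` for `t < h` and `(z ⋄_h z')(t) = z'(t - h)` for `t ≥ h`. -/
def concat {Ω : Type*} (z z' : ℝ → Ω) (h : ℝ) : ℝ → Ω :=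
  fun t => if t < h then z t else z' (t - h)

/-- The time average `v_T(z) = (1/T) ∫₀^T g(z(t)) dt`. -/
def timeAvg {Ω : Type*} (g : Ω → ℝ) (T : ℝ) (z : ℝ → Ω) : ℝ :=
  (1 / T) * ∫ t in Ioc (0 : ℝ) T, g (z t)

/-- The discounted average `w_λ(z) = λ ∫₀^∞ e^{-λ t} g(z(t)) dt`. -/
def discAvg {Ω : Type*} (g : Ω → ℝ) (lam : ℝ) (z : ℝ → Ω) : ℝ :=
  lam * ∫ t in Ioi (0 : ℝ), Real.exp (-lam * t) * g (z t)

/-- The value function `V[J](ω) = inf { J(z) : z ∈ K, z(0) = ω }`. -/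
def Val {Ω : Type*} (K : Set (ℝ → Ω)) (J : (ℝ → Ω) → ℝ) (ω : Ω) : ℝ :=
  sInf (J '' {z ∈ K | z 0 = ω})

/-- The state space `Ω = ℝ_{≥0} × ℝ_{≥0} × ℝ_{≥0}` of the example,
realized as a subset of `ℝ × ℝ × ℝ`. -/
def Omega3 : Set (ℝ × ℝ × ℝ) := {p | 0 ≤ p.1 ∧ 0 ≤ p.2.1 ∧ 0 ≤ p.2.2}

/-- The running cost of the example: `g(x,y,r) = 0` if `x ∈ [1,2]` and `r = 0`,
and `g(x,y,r) = 1` otherwise. -/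
def gex : ℝ × ℝ × ℝ → ℝ := fun p => if p.1 ∈ Icc (1 : ℝ) 2 ∧ p.2.2 = 0 then 0 else 1

/-- The process `a_ω(t) = (x, y, t + r)` for `ω = (x, y, r)`. -/
def aproc (ω : ℝ × ℝ × ℝ) : ℝ → ℝ × ℝ × ℝ := fun t => (ω.1, ω.2.1, t + ω.2.2)

/-- The process `b_s(t) = (s t, t, 0)`. -/
def bproc (s : ℝ) : ℝ → ℝ × ℝ × ℝ := fun t => (s * t, t, 0)

/-- The set `K` of feasible processes of the example:
`K = {a_ω : ω ∈ Ω} ∪ {b_s : s ≥ 0} ∪ {b_s ⋄_τ a_{b_s(τ)} : s ≥ 0, τ > 0}`. -/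
def Kex : Set (ℝ → ℝ × ℝ × ℝ) :=
  {z | ∃ ω ∈ Omega3, z = aproc ω} ∪ {z | ∃ s : ℝ, 0 ≤ s ∧ z = bproc s} ∪
    {z | ∃ s : ℝ, 0 ≤ s ∧ ∃ τ : ℝ, 0 < τ ∧ z = concat (bproc s) (aproc (bproc s τ)) τ}

/-- In the example, for every `ω ∈ Ω` with `ω ≠ (0,0,0)` and all `T, λ > 0`,
the value functions satisfy `V[v_T](ω) = 1` and `V[w_λ](ω) = 1`. -/
theorem val_eq_one (ω : ℝ × ℝ × ℝ) (hω : ω ∈ Omega3) (hne : ω ≠ (0, 0, 0))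
    (T lam : ℝ) (hT : 0 < T) (hlam : 0 < lam) :
    Val Kex (timeAvg gex T) ω = 1 ∧ Val Kex (discAvg gex lam) ω = 1 := by
  have haz : ∀ ω' : ℝ × ℝ × ℝ, aproc ω' 0 = ω' := by
    intro ω'; simp [aproc]
  have hset : {z ∈ Kex | z 0 = ω} = {aproc ω} := by
    apply Set.Subset.antisymm
    · rintro z ⟨hz, hz0⟩
      rcases hz with (⟨ω', _, rfl⟩ | ⟨s, _, rfl⟩) | ⟨s, _, τ, hτ, rfl⟩
      · rw [haz] at hz0; rw [hz0]; rfl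
      · exfalso; apply hne; rw [← hz0]; simp [bproc]
      · exfalso; apply hne; rw [← hz0]; simp [concat, bproc, hτ]
    · rintro z rfl
      exact ⟨Or.inl (Or.inl ⟨ω, hω, rfl⟩), haz ω⟩
  have hg : ∀ t : ℝ, 0 < t → gex (aproc ω t) = 1 := by
    intro t ht
    have hr : 0 ≤ ω.2.2 := hω.2.2
    have : t + ω.2.2 ≠ 0 := by positivity
    simp [gex, aproc, this]
  constructor
  · rw [Val, hset, Set.image_singleton, csInf_singleton, timeAvg]
    rw [setIntegral_congr_fun measurableSet_Ioc (fun t ht => hg t ht.1)]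
    simp [Real.volume_Ioc, hT.le, hT.ne']
  · rw [Val, hset, Set.image_singleton, csInf_singleton, discAvg]
    have hcg : ∀ t ∈ Ioi (0:ℝ), Real.exp (-lam * t) * gex (aproc ω t) = Real.exp (-lam * t) := by
      intro t ht; rw [hg t ht, mul_one]
    rw [setIntegral_congr_fun measurableSet_Ioi hcg]
    have : (∫ t in Ioi (0:ℝ), Real.exp (-lam * t)) = 1/lam := by
      have := integral_comp_mul_left_Ioi (fun x => Real.exp (-x)) 0 hlam
      simp only [mul_zero, integral_exp_neg_Ioi_zero, smul_eq_mul, mul_one] at this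
      simpa [neg_mul, one_div] using this
    rw [this]
    field_simp
end
end

section
/- In the example, for all s ≥ 0, τ > 0 and t ≥ 0 one has g(b_s(t)) ≤ g((b_s ⋄_τ a_{b_s(τ)})(t)) ≤ 1, and consequently for all T, λ > 0 the value functions at the origin satisfy V[v_T](0,0,0) = inf_{s>0} v_T(b_s) and V[w_λ](0,0,0) = inf_{s>0} w_λ(b_s). -/
open MeasureTheory Set Filter Topology

noncomputable section

/-! From the origin, every process in `K` is dominated in running cost, pointwise in time, by
some `b_s` with `s > 0`: the processes `a_ω` starting at the origin and `b_0` never enter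
`x ∈ [1,2]`, so they cost `1` throughout, while the concatenation `b_s ⋄_τ a_{b_s(τ)}` agrees
with `b_s` on `[0, τ]` and has `r > 0` afterwards. Both averages are monotone under pointwise
domination of a bounded cost, so the infimum over `K` equals the infimum along the `b_s`. -/

lemma norm_gex_le_one (p : ℝ × ℝ × ℝ) : ‖gex p‖ ≤ 1 := by
  unfold gex; split <;> norm_num

lemma gex_le_one (p : ℝ × ℝ × ℝ) : gex p ≤ 1 := by
  unfold gex; split <;> norm_num

lemma gex_eq_one_of_fst_notMem {p : ℝ × ℝ × ℝ} (h : p.1 ∉ Icc (1 : ℝ) 2) : gex p = 1 :=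
  if_neg fun hp => h hp.1

lemma gex_eq_one_of_ne_zero {p : ℝ × ℝ × ℝ} (h : p.2.2 ≠ 0) : gex p = 1 :=
  if_neg fun hp => h hp.2

lemma measurable_gex : Measurable gex :=
  Measurable.ite ((measurable_fst measurableSet_Icc).inter
    (measurable_snd.snd (measurableSet_singleton 0))) measurable_const measurable_const

lemma measurable_aproc (ω : ℝ × ℝ × ℝ) : Measurable (aproc ω) := by
  unfold aproc; fun_prop

lemma measurable_bproc (s : ℝ) : Measurable (bproc s) := by
  unfold bproc; fun_prop

lemma Measurable.concat {Ω : Type*} [MeasurableSpace Ω] {z z' : ℝ → Ω} (hz : Measurable z)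
    (hz' : Measurable z') (h : ℝ) : Measurable (concat z z' h) :=
  Measurable.ite measurableSet_Iio hz (hz'.comp (measurable_id.sub_const h))

lemma measurable_of_mem_Kex {z : ℝ → ℝ × ℝ × ℝ} (hz : z ∈ Kex) : Measurable z := by
  rcases hz with (⟨ω, -, rfl⟩ | ⟨s, -, rfl⟩) | ⟨s, -, τ, -, rfl⟩
  · exact measurable_aproc ω
  · exact measurable_bproc s
  · exact (measurable_bproc s).concat (measurable_aproc _) τ

section Averages

variable {Ω : Type*} [MeasurableSpace Ω] {g : Ω → ℝ} {C : ℝ} {z z₁ z₂ : ℝ → Ω}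

lemma integrableOn_Ioc_comp (hg : Measurable g) (hgC : ∀ p, ‖g p‖ ≤ C) (hz : Measurable z)
    (T : ℝ) : IntegrableOn (fun t => g (z t)) (Ioc 0 T) :=
  Integrable.mono' (integrableOn_const measure_Ioc_lt_top.ne)
    (hg.comp hz).aestronglyMeasurable (ae_of_all _ fun t => hgC (z t))

lemma integrableOn_Ioi_exp_mul_comp (hg : Measurable g) (hgC : ∀ p, ‖g p‖ ≤ C)
    (hz : Measurable z) {lam : ℝ} (hlam : 0 < lam) :
    IntegrableOn (fun t => Real.exp (-lam * t) * g (z t)) (Ioi 0) := by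
  refine ((exp_neg_integrableOn_Ioi 0 hlam).mul_const C).mono' (by fun_prop)
    (ae_of_all _ fun t => ?_)
  rw [norm_mul, Real.norm_of_nonneg (Real.exp_pos _).le]
  exact mul_le_mul_of_nonneg_left (hgC (z t)) (Real.exp_pos _).le

lemma timeAvg_mono (hg : Measurable g) (hgC : ∀ p, ‖g p‖ ≤ C) (hz₁ : Measurable z₁)
    (hz₂ : Measurable z₂) {T : ℝ} (hT : 0 ≤ T) (hle : ∀ t ∈ Ioc 0 T, g (z₁ t) ≤ g (z₂ t)) :
    timeAvg g T z₁ ≤ timeAvg g T z₂ :=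
  mul_le_mul_of_nonneg_left (setIntegral_mono_on (integrableOn_Ioc_comp hg hgC hz₁ T)
    (integrableOn_Ioc_comp hg hgC hz₂ T) measurableSet_Ioc hle) (by positivity)

lemma discAvg_mono (hg : Measurable g) (hgC : ∀ p, ‖g p‖ ≤ C) (hz₁ : Measurable z₁)
    (hz₂ : Measurable z₂) {lam : ℝ} (hlam : 0 < lam)
    (hle : ∀ t ∈ Ioi 0, g (z₁ t) ≤ g (z₂ t)) :
    discAvg g lam z₁ ≤ discAvg g lam z₂ :=
  mul_le_mul_of_nonneg_left (setIntegral_mono_on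
    (integrableOn_Ioi_exp_mul_comp hg hgC hz₁ hlam)
    (integrableOn_Ioi_exp_mul_comp hg hgC hz₂ hlam) measurableSet_Ioi
    fun t ht => mul_le_mul_of_nonneg_left (hle t ht) (Real.exp_pos _).le) hlam.le

end Averages

lemma gex_bproc_le_concat (s τ t : ℝ) :
    gex (bproc s t) ≤ gex (concat (bproc s) (aproc (bproc s τ)) τ t) := by
  unfold concat
  split_ifs with h
  · exact le_rfl
  rcases (not_lt.mp h).eq_or_lt with rfl | hlt
  · simp [aproc, bproc]
  · rw [gex_eq_one_of_ne_zero (p := aproc _ _)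
      (by simp [aproc, bproc, sub_ne_zero.mpr hlt.ne'])]
    exact gex_le_one _

lemma gex_bproc_zero (t : ℝ) : gex (bproc 0 t) = 1 :=
  gex_eq_one_of_fst_notMem (by simp [bproc])

lemma exists_pos_bproc_le {s : ℝ} (hs : 0 ≤ s) :
    ∃ s' > 0, ∀ t, gex (bproc s' t) ≤ gex (bproc s t) := by
  rcases hs.eq_or_lt with rfl | hs
  · exact ⟨1, one_pos, fun t => (gex_le_one _).trans_eq (gex_bproc_zero t).symm⟩
  · exact ⟨s, hs, fun _ => le_rfl⟩

lemma exists_pos_bproc_le_of_mem_Kex {z : ℝ → ℝ × ℝ × ℝ} (hz : z ∈ Kex)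
    (h0 : z 0 = (0, 0, 0)) : ∃ s > 0, ∀ t, gex (bproc s t) ≤ gex (z t) := by
  rcases hz with (⟨ω, -, rfl⟩ | ⟨s, hs, rfl⟩) | ⟨s, hs, τ, -, rfl⟩
  · have hω : ω.1 = 0 := congrArg Prod.fst h0
    refine ⟨1, one_pos, fun t => ?_⟩
    rw [gex_eq_one_of_fst_notMem (p := aproc ω t) (by simp [aproc, hω])]
    exact gex_le_one _
  · exact exists_pos_bproc_le hs
  · obtain ⟨s', hs', hle⟩ := exists_pos_bproc_le hs
    exact ⟨s', hs', fun t => (hle t).trans (gex_bproc_le_concat s τ t)⟩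

lemma bproc_mem_Kex {s : ℝ} (hs : 0 ≤ s) : bproc s ∈ Kex :=
  Or.inl (Or.inr ⟨s, hs, rfl⟩)

lemma val_Kex_zero_eq_sInf_bproc {J : (ℝ → ℝ × ℝ × ℝ) → ℝ}
    (hJ : ∀ s, ∀ z ∈ Kex, (∀ t, gex (bproc s t) ≤ gex (z t)) → J (bproc s) ≤ J z) :
    Val Kex J (0, 0, 0) = sInf ((fun s => J (bproc s)) '' Ioi 0) := by
  refine csInf_eq_csInf_of_forall_exists_le ?_ ?_
  · rintro _ ⟨z, ⟨hz, h0⟩, rfl⟩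
    obtain ⟨s, hs, hle⟩ := exists_pos_bproc_le_of_mem_Kex hz h0
    exact ⟨J (bproc s), ⟨s, hs, rfl⟩, hJ s z hz hle⟩
  · rintro _ ⟨s, hs, rfl⟩
    exact ⟨J (bproc s), ⟨bproc s, ⟨bproc_mem_Kex hs.le, by simp [bproc]⟩, rfl⟩, le_rfl⟩

/-- In the example, `g(b_s(t)) ≤ g((b_s ⋄_τ a_{b_s(τ)})(t)) ≤ 1` for all
`s ≥ 0`, `τ > 0`, `t ≥ 0`; consequently, for all `T, λ > 0`,
`V[v_T](0,0,0) = inf_{s>0} v_T(b_s)` and `V[w_λ](0,0,0) = inf_{s>0} w_λ(b_s)`. -/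
theorem val_origin_eq_inf :
    (∀ s τ t : ℝ, 0 ≤ s → 0 < τ → 0 ≤ t →
      gex (bproc s t) ≤ gex (concat (bproc s) (aproc (bproc s τ)) τ t) ∧
      gex (concat (bproc s) (aproc (bproc s τ)) τ t) ≤ 1) ∧
    (∀ T : ℝ, 0 < T →
      Val Kex (timeAvg gex T) (0, 0, 0) =
        sInf ((fun s => timeAvg gex T (bproc s)) '' Ioi (0 : ℝ))) ∧
    (∀ lam : ℝ, 0 < lam →
      Val Kex (discAvg gex lam) (0, 0, 0) =
        sInf ((fun s => discAvg gex lam (bproc s)) '' Ioi (0 : ℝ))) := by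
  refine ⟨fun s τ t _ _ _ => ⟨gex_bproc_le_concat s τ t, gex_le_one _⟩,
    fun T hT => val_Kex_zero_eq_sInf_bproc fun s z hz hle => ?_,
    fun lam hlam => val_Kex_zero_eq_sInf_bproc fun s z hz hle => ?_⟩
  · exact timeAvg_mono measurable_gex norm_gex_le_one (measurable_bproc s)
      (measurable_of_mem_Kex hz) hT.le fun t _ => hle t
  · exact discAvg_mono measurable_gex norm_gex_le_one (measurable_bproc s)
      (measurable_of_mem_Kex hz) hlam fun t _ => hle t
end
end

section
/- In the example, for every λ > 0 the discounted value at the origin equals V[w_λ](0,0,0) = 3/4. -/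
open MeasureTheory Set Filter Topology

noncomputable section

lemma expInt (lam : ℝ) (hlam : 0 < lam) :
    ∫ t in Ioi (0:ℝ), Real.exp (-lam * t) = 1 / lam := by
  have := MeasureTheory.integral_comp_mul_left_Ioi (fun x => Real.exp (-x)) 0 hlam
  simp only [mul_zero, neg_mul] at this ⊢
  rw [show (fun t => Real.exp (-(lam * t))) = (fun t => (fun x => Real.exp (-x)) (lam * t)) from rfl]
  rw [this, integral_exp_neg_Ioi_zero]
  simp [one_div]

lemma expIntIcc (lam a b : ℝ) (hlam : 0 < lam) (hab : a ≤ b) :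
    ∫ t in Icc a b, Real.exp (-lam * t) = (Real.exp (-lam * a) - Real.exp (-lam * b)) / lam := by
  rw [MeasureTheory.integral_Icc_eq_integral_Ioc, ← intervalIntegral.integral_of_le hab]
  rw [show (fun t => Real.exp (-lam * t)) = (fun t => Real.exp ((-lam) * t)) from rfl]
  rw [intervalIntegral.integral_comp_mul_left Real.exp (by linarith : (-lam) ≠ 0)]
  rw [integral_exp, smul_eq_mul, inv_neg, div_eq_mul_inv]
  ring

lemma gex_bproc (s t : ℝ) :
    gex (bproc s t) = if s * t ∈ Icc (1:ℝ) 2 then 0 else 1 := by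
  simp [gex, bproc]

lemma discAvg_bproc (lam s : ℝ) (hlam : 0 < lam) (hs : 0 < s) :
    discAvg gex lam (bproc s) =
      1 - Real.exp (-(lam / s)) + Real.exp (-(lam / s)) ^ 2 := by
  have hIccsub : Icc (1/s) (2/s) ⊆ Ioi (0:ℝ) := fun x hx =>
    lt_of_lt_of_le (by positivity) hx.1
  have hcong : ∀ t ∈ Ioi (0:ℝ),
      Real.exp (-lam * t) * gex (bproc s t) =
      Real.exp (-lam * t) - (Icc (1/s) (2/s)).indicator (fun t => Real.exp (-lam * t)) t := by
    intro t ht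
    rw [gex_bproc]
    by_cases h : s * t ∈ Icc (1:ℝ) 2
    · have h2 : t ∈ Icc (1/s) (2/s) := ⟨(div_le_iff₀ hs).2 (by nlinarith [h.1]),
        (le_div_iff₀ hs).2 (by nlinarith [h.2])⟩
      rw [if_pos h, indicator_of_mem h2]
      ring
    · have h2 : t ∉ Icc (1/s) (2/s) := by
        intro hmem
        have ha := hmem.1; have hb := hmem.2
        rw [div_le_iff₀ hs] at ha
        rw [le_div_iff₀ hs] at hb
        exact h ⟨by nlinarith, by nlinarith⟩
      rw [if_neg h, indicator_of_notMem h2]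
      ring
  have hint1 : IntegrableOn (fun t => Real.exp (-lam * t)) (Ioi (0:ℝ)) :=
    exp_neg_integrableOn_Ioi 0 hlam
  have hint2 : IntegrableOn ((Icc (1/s) (2/s)).indicator (fun t => Real.exp (-lam * t))) (Ioi (0:ℝ)) :=
    hint1.indicator measurableSet_Icc
  unfold discAvg
  rw [setIntegral_congr_fun measurableSet_Ioi hcong, integral_sub hint1 hint2]
  rw [integral_indicator measurableSet_Icc, Measure.restrict_restrict measurableSet_Icc,
    inter_eq_left.mpr hIccsub]
  rw [expInt lam hlam, expIntIcc lam _ _ hlam (by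
    rw [div_le_div_iff₀ hs hs]; nlinarith)]
  have h1 : -lam * (1/s) = -(lam/s) := by ring
  have h2 : -lam * (2/s) = -(lam/s) + -(lam/s) := by ring
  rw [h1, h2, Real.exp_add, ← sq]
  field_simp
  ring

lemma gex_nonneg (p : ℝ × ℝ × ℝ) : 0 ≤ gex p := by unfold gex; split <;> norm_num

lemma discAvg_bproc_zero (lam : ℝ) (hlam : 0 < lam) : discAvg gex lam (bproc 0) = 1 := by
  unfold discAvg
  have : ∀ t ∈ Ioi (0:ℝ), Real.exp (-lam * t) * gex (bproc 0 t) = Real.exp (-lam * t) := by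
    intro t _
    rw [gex_bproc]
    norm_num
  rw [setIntegral_congr_fun measurableSet_Ioi this, expInt lam hlam]
  field_simp

lemma lb_bproc (lam s : ℝ) (hlam : 0 < lam) (hs : 0 ≤ s) :
    3 / 4 ≤ discAvg gex lam (bproc s) := by
  rcases hs.eq_or_lt with h | h
  · rw [← h, discAvg_bproc_zero lam hlam]; norm_num
  · rw [discAvg_bproc lam s hlam h]
    nlinarith [sq_nonneg (Real.exp (-(lam / s)) - 1/2)]

lemma meas_bintegrand (lam s : ℝ) :
    Measurable (fun t => Real.exp (-lam * t) * gex (bproc s t)) := by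
  have h1 : Measurable (fun t : ℝ => Real.exp (-lam * t)) := by fun_prop
  apply h1.mul
  have : (fun t => gex (bproc s t)) = fun t => if s * t ∈ Icc (1:ℝ) 2 then (0:ℝ) else 1 := by
    funext t; exact gex_bproc s t
  rw [this]
  exact Measurable.ite (measurableSet_preimage (by fun_prop) measurableSet_Icc)
    measurable_const measurable_const

lemma integrand_bound (lam : ℝ) (z : ℝ → ℝ × ℝ × ℝ) (t : ℝ) :
    ‖Real.exp (-lam * t) * gex (z t)‖ ≤ ‖Real.exp (-lam * t)‖ := by
  rw [norm_mul, Real.norm_eq_abs, Real.norm_eq_abs, abs_of_pos (Real.exp_pos _),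
    abs_of_nonneg (gex_nonneg _)]
  nlinarith [gex_le_one (z t), Real.exp_pos (-lam * t)]

lemma int_bintegrand (lam s : ℝ) (hlam : 0 < lam) :
    IntegrableOn (fun t => Real.exp (-lam * t) * gex (bproc s t)) (Ioi 0) := by
  apply Integrable.mono (exp_neg_integrableOn_Ioi 0 hlam)
    ((meas_bintegrand lam s).aestronglyMeasurable)
  exact Eventually.of_forall (integrand_bound lam (bproc s))

lemma gex_concat (s τ t : ℝ) :
    gex (concat (bproc s) (aproc (bproc s τ)) τ t) =
      if t < τ then gex (bproc s t) else (if s * τ ∈ Icc (1:ℝ) 2 ∧ t - τ = 0 then 0 else 1) := by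
  unfold concat
  by_cases h : t < τ
  · simp [h]
  · simp only [h, if_false]
    simp [gex, aproc, bproc]

lemma meas_cintegrand (lam s τ : ℝ) :
    Measurable (fun t => Real.exp (-lam * t) * gex (concat (bproc s) (aproc (bproc s τ)) τ t)) := by
  have h1 : Measurable (fun t : ℝ => Real.exp (-lam * t)) := by fun_prop
  apply h1.mul
  have : (fun t => gex (concat (bproc s) (aproc (bproc s τ)) τ t)) =
      fun t => if t < τ then (if s * t ∈ Icc (1:ℝ) 2 then (0:ℝ) else 1)
        else (if s * τ ∈ Icc (1:ℝ) 2 ∧ t - τ = 0 then 0 else 1) := by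
    funext t; rw [gex_concat, gex_bproc]
  rw [this]
  apply Measurable.ite (measurableSet_lt measurable_id measurable_const)
  · exact Measurable.ite (measurableSet_preimage (by fun_prop) measurableSet_Icc)
      measurable_const measurable_const
  · apply Measurable.ite _ measurable_const measurable_const
    by_cases h : s * τ ∈ Icc (1:ℝ) 2
    · have : {t : ℝ | s * τ ∈ Icc (1:ℝ) 2 ∧ t - τ = 0} = {τ} := by
        ext t; simp [h, sub_eq_zero]
      rw [this]; exact measurableSet_singleton τ
    · have : {t : ℝ | s * τ ∈ Icc (1:ℝ) 2 ∧ t - τ = 0} = ∅ := by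
        ext t; simp [h]
      rw [this]; exact MeasurableSet.empty

lemma lb_concat (lam s τ : ℝ) (hlam : 0 < lam) (hτ : 0 < τ) :
    discAvg gex lam (bproc s) ≤ discAvg gex lam (concat (bproc s) (aproc (bproc s τ)) τ) := by
  unfold discAvg
  apply mul_le_mul_of_nonneg_left _ hlam.le
  have hint2 : IntegrableOn
      (fun t => Real.exp (-lam * t) * gex (concat (bproc s) (aproc (bproc s τ)) τ t)) (Ioi 0) := by
    apply Integrable.mono (exp_neg_integrableOn_Ioi 0 hlam)
      ((meas_cintegrand lam s τ).aestronglyMeasurable)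
    exact Eventually.of_forall (integrand_bound lam _)
  apply integral_mono_ae (int_bintegrand lam s hlam) hint2
  have hne : ∀ᵐ t : ℝ, t ≠ τ := by
    rw [ae_iff]
    simp only [not_not, setOf_eq_eq_singleton]
    exact measure_singleton τ
  apply ae_restrict_of_ae
  filter_upwards [hne] with t ht
  apply mul_le_mul_of_nonneg_left _ (Real.exp_pos _).le
  rw [gex_concat]
  by_cases h : t < τ
  · simp [h]
  · rw [if_neg h, if_neg (by intro hc; exact ht (by linarith [hc.2, sub_eq_zero.mp hc.2]))]
    exact gex_le_one _

lemma lb_aproc (lam : ℝ) (hlam : 0 < lam) (ω : ℝ × ℝ × ℝ) (h1 : ω.1 = 0) :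
    discAvg gex lam (aproc ω) = 1 := by
  unfold discAvg
  have : ∀ t ∈ Ioi (0:ℝ), Real.exp (-lam * t) * gex (aproc ω t) = Real.exp (-lam * t) := by
    intro t _
    have : gex (aproc ω t) = 1 := by
      unfold gex aproc
      rw [if_neg]
      simp only [h1]
      intro hc
      have := hc.1.1
      norm_num at this
    rw [this, mul_one]
  rw [setIntegral_congr_fun measurableSet_Ioi this, expInt lam hlam]
  field_simp


/-- In the example, for every `λ > 0` the discounted value at the origin equals
`V[w_λ](0,0,0) = 3/4`. -/
theorem val_disc_origin (lam : ℝ) (hlam : 0 < lam) :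
    Val Kex (discAvg gex lam) (0, 0, 0) = 3 / 4 := by
  have hlb : ∀ y ∈ discAvg gex lam '' {z ∈ Kex | z 0 = ((0:ℝ), (0:ℝ), (0:ℝ))}, 3 / 4 ≤ y := by
    rintro y ⟨z, ⟨hK, hz0⟩, rfl⟩
    rcases hK with (⟨ω, hω, rfl⟩ | ⟨s, hs, rfl⟩) | ⟨s, hs, τ, hτ, rfl⟩
    · have h1 : ω.1 = 0 := by
        have := congrArg Prod.fst hz0
        simpa [aproc] using this
      rw [lb_aproc lam hlam ω h1]; norm_num
    · exact lb_bproc lam s hlam hs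
    · exact (lb_bproc lam s hlam hs).trans (lb_concat lam s τ hlam hτ)
  have hs0 : 0 < lam / Real.log 2 := div_pos hlam (Real.log_pos (by norm_num))
  have hmem : 3 / 4 ∈ discAvg gex lam '' {z ∈ Kex | z 0 = ((0:ℝ), (0:ℝ), (0:ℝ))} := by
    refine ⟨bproc (lam / Real.log 2), ⟨Or.inl (Or.inr ⟨_, hs0.le, rfl⟩), by simp [bproc]⟩, ?_⟩
    rw [discAvg_bproc lam _ hlam hs0]
    have h2 : lam / (lam / Real.log 2) = Real.log 2 := by
      field_simp
    rw [h2, Real.exp_neg, Real.exp_log (by norm_num)]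
    norm_num
  unfold Val
  exact le_antisymm (csInf_le ⟨3/4, hlb⟩ hmem) (le_csInf ⟨3/4, hmem⟩ hlb)
end
end
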